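/- If ||ω(x)|| ≤ ||ψ(x)|| (the gradient balance condition holds), then the subspace ISTA step x⁺ = x - αψ(x) with 0 < α ≤ 1/L satisfies F(x⁺) - F(x*) ≤ (1 - (λα)/2)(F(x) - F(x*)). -/

import Mathlib

/-!
The step `p = x - α ψ(x)` is an exact proximal gradient step for `F`, taken with the gradient
`g - ω(x)` instead of `g`: on the zero set of `x` the perturbed gradient lies in `[-τ, τ]`, so
soft thresholding keeps those coordinates at `0`. The three-point inequality of such a step and
`α ≤ 1/L` give, tested at `x`, the sufficient decrease `F(p) ≤ F(x) - (α/2)‖ψ‖²`, and, tested at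
`x + λα (x* - x)` together with `λ`-strong convexity and Young's inequality on the `ω` term,
`F(p) ≤ (1 - λα) F(x) + λα F(x*) + (α/2)‖ω‖²`. Adding the two and using `‖ω‖ ≤ ‖ψ‖` gives the
contraction.
-/

noncomputable def softThreshold (r u : ℝ) : ℝ := max (|u| - r) 0 * Real.sign u

section softThreshold

variable {r : ℝ}

lemma softThreshold_cases (hr : 0 ≤ r) (u : ℝ) :
    (|u| ≤ r ∧ softThreshold r u = 0) ∨ (r < u ∧ softThreshold r u = u - r) ∨
      (u < -r ∧ softThreshold r u = u + r) := by
  unfold softThreshold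
  rcases le_or_gt |u| r with h | h
  · exact Or.inl ⟨h, by rw [max_eq_right (by linarith), zero_mul]⟩
  rcases lt_abs.mp h with h' | h'
  · refine Or.inr (Or.inl ⟨h', ?_⟩)
    rw [abs_of_pos (by linarith), Real.sign_of_pos (by linarith), max_eq_left (by linarith)]
    ring
  · refine Or.inr (Or.inr ⟨by linarith, ?_⟩)
    rw [abs_of_neg (by linarith), Real.sign_of_neg (by linarith), max_eq_left (by linarith)]
    ring

lemma abs_sub_softThreshold_le (hr : 0 ≤ r) (u : ℝ) : |u - softThreshold r u| ≤ r := by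
  rcases softThreshold_cases hr u with ⟨h, hT⟩ | ⟨-, hT⟩ | ⟨-, hT⟩ <;> rw [hT]
  · simpa using h
  · simp [abs_of_nonneg hr]
  · simp [abs_of_nonneg hr]

lemma sub_softThreshold_mul_self (hr : 0 ≤ r) (u : ℝ) :
    (u - softThreshold r u) * softThreshold r u = r * |softThreshold r u| := by
  rcases softThreshold_cases hr u with ⟨-, hT⟩ | ⟨h, hT⟩ | ⟨h, hT⟩ <;> rw [hT]
  · simp
  · rw [abs_of_pos (by linarith)]; ring
  · rw [abs_of_neg (by linarith)]; ring

lemma sub_softThreshold_mul_le (hr : 0 ≤ r) (u z : ℝ) :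
    (u - softThreshold r u) * z ≤ r * |z| :=
  calc (u - softThreshold r u) * z ≤ |u - softThreshold r u| * |z| := by
        rw [← abs_mul]; exact le_abs_self _
    _ ≤ r * |z| := mul_le_mul_of_nonneg_right (abs_sub_softThreshold_le hr u) (abs_nonneg z)

lemma softThreshold_variational (hr : 0 ≤ r) (u z : ℝ) :
    (u - softThreshold r u) * (z - softThreshold r u) ≤ r * (|z| - |softThreshold r u|) := by
  linarith [sub_softThreshold_mul_le hr u z, sub_softThreshold_mul_self hr u]

lemma softThreshold_three_point {α τ : ℝ} (hα : 0 < α) (hτ : 0 ≤ τ) (x g z : ℝ) :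
    g * (softThreshold (α * τ) (x - α * g) - z)
        + τ * (|softThreshold (α * τ) (x - α * g)| - |z|)
      ≤ ((z - x) ^ 2 - (softThreshold (α * τ) (x - α * g) - x) ^ 2
          - (softThreshold (α * τ) (x - α * g) - z) ^ 2) / (2 * α) := by
  rw [le_div_iff₀ (by positivity)]
  linear_combination 2 * softThreshold_variational (mul_nonneg hα.le hτ) (x - α * g) z

lemma softThreshold_eq_ite {τ : ℝ} (hτ : 0 ≤ τ) (g : ℝ) :
    (if |g| ≤ τ then 0 else g - τ * Real.sign g) = softThreshold τ g := by
  rcases softThreshold_cases hτ g with ⟨h, hT⟩ | ⟨h, hT⟩ | ⟨h, hT⟩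
  · rw [if_pos h, hT]
  · rw [if_neg (by rw [abs_of_pos (by linarith)]; linarith), hT, Real.sign_of_pos (by linarith)]
    ring
  · rw [if_neg (by rw [abs_of_neg (by linarith)]; linarith), hT, Real.sign_of_neg (by linarith)]
    ring

end softThreshold

section SubspaceStep

variable {ι : Type*}

/-- The subspace ISTA step `x - α ψ(x)`. -/
noncomputable def istaSubspaceStep (α τ : ℝ) (x g : ι → ℝ) : ι → ℝ :=
  fun i => if x i = 0 then 0 else softThreshold (α * τ) (x i - α * g i)

/-- The vector `ω(x)`: on the zero set of `x`, the least-norm element of `g i + [-τ, τ]`. -/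
noncomputable def zeroSetGrad (τ : ℝ) (x g : ι → ℝ) : ι → ℝ :=
  fun i => if x i = 0 then softThreshold τ (g i) else 0

variable {α τ : ℝ}

lemma sub_smul_eq_istaSubspaceStep (hα : α ≠ 0) {x g psi : ι → ℝ} (hpsi : ∀ i, psi i =
      if x i = 0 then 0
      else 1 / α * (x i - max (|x i - α * g i| - α * τ) 0 * Real.sign (x i - α * g i))) :
    x - α • psi = istaSubspaceStep α τ x g := by
  funext i
  simp only [Pi.sub_apply, Pi.smul_apply, smul_eq_mul, hpsi, istaSubspaceStep, softThreshold]
  split_ifs with hx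
  · simp [hx]
  · field_simp; ring

lemma eq_zeroSetGrad (hτ : 0 ≤ τ) {x g omega : ι → ℝ} (homega : ∀ i, omega i =
      if x i ≠ 0 then 0
      else if |g i| ≤ τ then 0
      else g i - τ * Real.sign (g i)) :
    omega = zeroSetGrad τ x g := by
  funext i
  rw [homega, zeroSetGrad, softThreshold_eq_ite hτ]
  split_ifs <;> simp_all

end SubspaceStep

open Matrix

lemma mul_le_one_of_le_one_div {α L : ℝ} (hα : 0 < α) (h : α ≤ 1 / L) : α * L ≤ 1 := by
  rcases le_or_gt L 0 with hL | hL
  · nlinarith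
  · rwa [le_div_iff₀ hL] at h

section Lasso

variable {ι : Type*} [Fintype ι]

lemma le_of_forall_mul_dotProduct_self_le [Nonempty ι] {a c : ℝ}
    (h : ∀ y : ι → ℝ, a * (y ⬝ᵥ y) ≤ c * (y ⬝ᵥ y)) : a ≤ c := by
  have hpos : 0 < (fun _ => (1 : ℝ)) ⬝ᵥ (fun _ : ι => (1 : ℝ)) := by
    simp [dotProduct, Fintype.card_pos]
  exact le_of_mul_le_mul_right (h _) hpos

lemma mul_dotProduct_mulVec_le_dotProduct_self {A : Matrix ι ι ℝ} {L α : ℝ}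
    (hup : ∀ y, y ⬝ᵥ A *ᵥ y ≤ L * (y ⬝ᵥ y)) (hα : 0 ≤ α) (hαL : α * L ≤ 1) (y : ι → ℝ) :
    α * (y ⬝ᵥ A *ᵥ y) ≤ y ⬝ᵥ y := by
  have hy : 0 ≤ y ⬝ᵥ y := dotProduct_star_self_nonneg y
  nlinarith [mul_le_mul_of_nonneg_left (hup y) hα]

lemma dotProduct_le_young {α : ℝ} (hα : 0 < α) (v w : ι → ℝ) :
    v ⬝ᵥ w ≤ α / 2 * (v ⬝ᵥ v) + (w ⬝ᵥ w) / (2 * α) := by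
  have h : 0 ≤ (α • v - w) ⬝ᵥ (α • v - w) := dotProduct_star_self_nonneg _
  simp only [dotProduct_sub, sub_dotProduct, dotProduct_smul, smul_dotProduct,
    smul_eq_mul, dotProduct_comm w v] at h
  rw [← sub_nonneg]
  have : α / 2 * (v ⬝ᵥ v) + (w ⬝ᵥ w) / (2 * α) - v ⬝ᵥ w
      = (α * (α * (v ⬝ᵥ v)) - α * (v ⬝ᵥ w) - (α * (v ⬝ᵥ w) - w ⬝ᵥ w)) / (2 * α) := by
    field_simp; ring
  rw [this]; exact div_nonneg (by linarith) (by positivity)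

noncomputable def lasso (A : Matrix ι ι ℝ) (b : ι → ℝ) (τ : ℝ) (y : ι → ℝ) : ℝ :=
  1 / 2 * (y ⬝ᵥ A *ᵥ y) - b ⬝ᵥ y + τ * ∑ i, |y i|

lemma lasso_eq_add {A : Matrix ι ι ℝ} (hA : A.IsSymm) (b : ι → ℝ) (τ : ℝ) (x y : ι → ℝ) :
    lasso A b τ y = lasso A b τ x + (A *ᵥ x - b) ⬝ᵥ (y - x)
      + 1 / 2 * ((y - x) ⬝ᵥ A *ᵥ (y - x)) + τ * (∑ i, |y i| - ∑ i, |x i|) := by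
  have hsym : x ⬝ᵥ A *ᵥ y = y ⬝ᵥ A *ᵥ x := by
    rw [dotProduct_mulVec, ← mulVec_transpose, hA, dotProduct_comm]
  simp only [lasso, mulVec_sub, dotProduct_sub, sub_dotProduct, dotProduct_comm (A *ᵥ x)]
  linear_combination (1 / 2 : ℝ) * hsym

lemma sum_abs_add_smul_sub_le {t : ℝ} (ht0 : 0 ≤ t) (ht1 : t ≤ 1) (x y : ι → ℝ) :
    ∑ i, |(x + t • (y - x)) i| ≤ (1 - t) * ∑ i, |x i| + t * ∑ i, |y i| := by
  rw [Finset.mul_sum, Finset.mul_sum, ← Finset.sum_add_distrib]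
  refine Finset.sum_le_sum fun i _ => ?_
  calc |(x + t • (y - x)) i| = |(1 - t) * x i + t * y i| := by
        simp only [Pi.add_apply, Pi.smul_apply, Pi.sub_apply, smul_eq_mul]; ring_nf
    _ ≤ |(1 - t) * x i| + |t * y i| := abs_add_le _ _
    _ = (1 - t) * |x i| + t * |y i| := by
      rw [abs_mul, abs_mul, abs_of_nonneg (by linarith), abs_of_nonneg ht0]

lemma lasso_add_smul_sub_le {A : Matrix ι ι ℝ} (hA : A.IsSymm) (b : ι → ℝ) {τ t : ℝ}
    (hτ : 0 ≤ τ) (ht0 : 0 ≤ t) (ht1 : t ≤ 1) (x y : ι → ℝ) :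
    lasso A b τ (x + t • (y - x)) ≤ (1 - t) * lasso A b τ x + t * lasso A b τ y
      - t * (1 - t) / 2 * ((y - x) ⬝ᵥ A *ᵥ (y - x)) := by
  rw [lasso_eq_add hA b τ x (x + t • (y - x)), lasso_eq_add hA b τ x y, add_sub_cancel_left,
    mulVec_smul, dotProduct_smul, smul_dotProduct, dotProduct_smul]
  simp only [smul_eq_mul]
  nlinarith [mul_le_mul_of_nonneg_left (sum_abs_add_smul_sub_le ht0 ht1 x y) hτ]

/-- The three-point inequality of a proximal gradient step from `x` with step size `α` for
`τ ‖·‖₁`, taken with the gradient `g - w` in place of `g`. -/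
def IsProxGradStep (α τ : ℝ) (x g w p : ι → ℝ) : Prop :=
  ∀ z, g ⬝ᵥ (p - z) + τ * (∑ i, |p i| - ∑ i, |z i|)
    ≤ ((z - x) ⬝ᵥ (z - x) - (p - x) ⬝ᵥ (p - x) - (p - z) ⬝ᵥ (p - z)) / (2 * α) + w ⬝ᵥ (p - z)

variable {α τ : ℝ}

lemma isProxGradStep_istaSubspaceStep (hα : 0 < α) (hτ : 0 ≤ τ) (x g : ι → ℝ) :
    IsProxGradStep α τ x g (zeroSetGrad τ x g) (istaSubspaceStep α τ x g) := by
  intro z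
  simp only [dotProduct, Pi.sub_apply, ← Finset.sum_sub_distrib, Finset.mul_sum,
    Finset.sum_div, ← Finset.sum_add_distrib]
  refine Finset.sum_le_sum fun i _ => ?_
  simp only [istaSubspaceStep, zeroSetGrad]
  split_ifs with hx
  · have h := sub_softThreshold_mul_le hτ (g i) (-z i)
    rw [abs_neg] at h
    rw [hx, abs_zero]
    linear_combination h
  · linear_combination softThreshold_three_point hα hτ (x i) (g i) (z i)

lemma zeroSetGrad_dotProduct_istaSubspaceStep_sub (x g : ι → ℝ) :
    zeroSetGrad τ x g ⬝ᵥ (istaSubspaceStep α τ x g - x) = 0 := by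
  refine Finset.sum_eq_zero fun i _ => ?_
  simp only [zeroSetGrad, istaSubspaceStep, Pi.sub_apply]
  split_ifs with hx <;> simp [hx]

variable {A : Matrix ι ι ℝ} {b x p w : ι → ℝ}

lemma lasso_le_of_isProxGradStep (hA : A.IsSymm) (hα : 0 < α)
    (hsmooth : ∀ y, α * (y ⬝ᵥ A *ᵥ y) ≤ y ⬝ᵥ y) (hp : IsProxGradStep α τ x (A *ᵥ x - b) w p)
    (z : ι → ℝ) :
    lasso A b τ p ≤ lasso A b τ z + ((z - x) ⬝ᵥ (z - x) - (p - z) ⬝ᵥ (p - z)) / (2 * α)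
      + w ⬝ᵥ (p - z) - 1 / 2 * ((z - x) ⬝ᵥ A *ᵥ (z - x)) := by
  have hquad : 1 / 2 * ((p - x) ⬝ᵥ A *ᵥ (p - x)) ≤ (p - x) ⬝ᵥ (p - x) / (2 * α) := by
    rw [le_div_iff₀ (by positivity)]
    linarith [hsmooth (p - x)]
  have h3 := hp z
  rw [lasso_eq_add hA b τ x p, lasso_eq_add hA b τ x z]
  have hlin : (A *ᵥ x - b) ⬝ᵥ (p - x) - (A *ᵥ x - b) ⬝ᵥ (z - x) = (A *ᵥ x - b) ⬝ᵥ (p - z) := by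
    rw [← dotProduct_sub, sub_sub_sub_cancel_right]
  have hsplit : ((z - x) ⬝ᵥ (z - x) - (p - x) ⬝ᵥ (p - x) - (p - z) ⬝ᵥ (p - z)) / (2 * α)
      = ((z - x) ⬝ᵥ (z - x) - (p - z) ⬝ᵥ (p - z)) / (2 * α) - (p - x) ⬝ᵥ (p - x) / (2 * α) := by
    ring
  linarith

lemma lasso_le_sub_of_isProxGradStep (hA : A.IsSymm) (hα : 0 < α)
    (hsmooth : ∀ y, α * (y ⬝ᵥ A *ᵥ y) ≤ y ⬝ᵥ y) (hp : IsProxGradStep α τ x (A *ᵥ x - b) w p)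
    (hw : w ⬝ᵥ (p - x) = 0) :
    lasso A b τ p ≤ lasso A b τ x - (p - x) ⬝ᵥ (p - x) / (2 * α) := by
  have h := lasso_le_of_isProxGradStep hA hα hsmooth hp x
  simp only [sub_self, zero_dotProduct, dotProduct_zero, hw] at h
  linarith [show (0 - (p - x) ⬝ᵥ (p - x)) / (2 * α) = -((p - x) ⬝ᵥ (p - x) / (2 * α)) by ring]

lemma lasso_le_convexComb_of_isProxGradStep (hA : A.IsSymm) (hα : 0 < α) (hτ : 0 ≤ τ)
    {lam : ℝ} (hlam : 0 ≤ lam) (hlamα : lam * α ≤ 1)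
    (hlow : ∀ y, lam * (y ⬝ᵥ y) ≤ y ⬝ᵥ A *ᵥ y) (hsmooth : ∀ y, α * (y ⬝ᵥ A *ᵥ y) ≤ y ⬝ᵥ y)
    (hp : IsProxGradStep α τ x (A *ᵥ x - b) w p) (y : ι → ℝ) :
    lasso A b τ p ≤ (1 - lam * α) * lasso A b τ x + lam * α * lasso A b τ y
      + α / 2 * (w ⬝ᵥ w) := by
  set t := lam * α with ht
  have ht0 : 0 ≤ t := by positivity
  have h := lasso_le_of_isProxGradStep hA hα hsmooth hp (x + t • (y - x))
  have hseg := lasso_add_smul_sub_le hA b hτ ht0 hlamα x y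
  have hyoung := dotProduct_le_young hα w (p - (x + t • (y - x)))
  simp only [add_sub_cancel_left, dotProduct_smul, smul_dotProduct, mulVec_smul,
    smul_eq_mul] at h
  have hlow' := mul_le_mul_of_nonneg_left (hlow (y - x)) ht0
  have hsplit : (t * (t * ((y - x) ⬝ᵥ (y - x))) - (p - (x + t • (y - x))) ⬝ᵥ (p - (x + t • (y - x))))
      / (2 * α) = t * (lam * ((y - x) ⬝ᵥ (y - x))) / 2
        - (p - (x + t • (y - x))) ⬝ᵥ (p - (x + t • (y - x))) / (2 * α) := by
    rw [ht]; field_simp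
  linarith

end Lasso

open Matrix in
theorem subspace_ista_linear_decrease_general
    (n : ℕ) (A : Matrix (Fin n) (Fin n) ℝ) (hA : A.IsSymm)
    (lam L : ℝ) (hlam : 0 < lam)
    (hAlow : ∀ y : Fin n → ℝ, lam * (y ⬝ᵥ y) ≤ y ⬝ᵥ A.mulVec y)
    (hAup : ∀ y : Fin n → ℝ, y ⬝ᵥ A.mulVec y ≤ L * (y ⬝ᵥ y))
    (b : Fin n → ℝ) (τ : ℝ) (hτ : 0 ≤ τ)
    (F : (Fin n → ℝ) → ℝ)
    (hF : ∀ y, F y = 1 / 2 * (y ⬝ᵥ A.mulVec y) - b ⬝ᵥ y + τ * ∑ i, |y i|)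
    (xstar : Fin n → ℝ)
    (x : Fin n → ℝ) (α : ℝ) (hα0 : 0 < α) (hαL : α ≤ 1 / L)
    (g : Fin n → ℝ) (hg : g = A.mulVec x - b)
    (omega psi : Fin n → ℝ)
    (homega : ∀ i, omega i =
      if x i ≠ 0 then 0
      else if |g i| ≤ τ then 0
      else g i - τ * Real.sign (g i))
    (hpsi : ∀ i, psi i =
      if x i = 0 then 0
      else 1 / α * (x i - max (|x i - α * g i| - α * τ) 0 * Real.sign (x i - α * g i)))
    (hbalance : Real.sqrt (omega ⬝ᵥ omega) ≤ Real.sqrt (psi ⬝ᵥ psi)) :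
    F (x - α • psi) - F xstar ≤ (1 - lam * α / 2) * (F x - F xstar) := by
  rcases isEmpty_or_nonempty (Fin n) with hn | hn
  · rw [Subsingleton.elim (x - α • psi) xstar, Subsingleton.elim x xstar]
    simp
  obtain rfl : F = lasso A b τ := funext hF
  subst hg
  have hαL' := mul_le_one_of_le_one_div hα0 hαL
  have hsmooth := mul_dotProduct_mulVec_le_dotProduct_self hAup hα0.le hαL'
  have hlamα : lam * α ≤ 1 := by
    nlinarith [le_of_forall_mul_dotProduct_self_le fun y => (hAlow y).trans (hAup y)]
  obtain ⟨hp, hw⟩ : IsProxGradStep α τ x (A *ᵥ x - b) omega (x - α • psi)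
      ∧ omega ⬝ᵥ (x - α • psi - x) = 0 := by
    rw [sub_smul_eq_istaSubspaceStep hα0.ne' hpsi, eq_zeroSetGrad hτ homega]
    exact ⟨isProxGradStep_istaSubspaceStep hα0 hτ x _,
      zeroSetGrad_dotProduct_istaSubspaceStep_sub x _⟩
  have hdesc := lasso_le_sub_of_isProxGradStep hA hα0 hsmooth hp hw
  have hconv := lasso_le_convexComb_of_isProxGradStep hA hα0 hτ hlam.le hlamα hAlow hsmooth hp
    xstar
  have hpsi_sq : (x - α • psi - x) ⬝ᵥ (x - α • psi - x) / (2 * α) = α / 2 * (psi ⬝ᵥ psi) := by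
    simp only [sub_sub_cancel_left, neg_dotProduct, dotProduct_neg, smul_dotProduct,
      dotProduct_smul, smul_eq_mul]
    field_simp
  have hbal : omega ⬝ᵥ omega ≤ psi ⬝ᵥ psi :=
    (Real.sqrt_le_sqrt_iff (dotProduct_star_self_nonneg psi)).mp hbalance
  nlinarith [mul_le_mul_of_nonneg_left hbal (by positivity : 0 ≤ α / 2)]

open Matrix in
theorem subspace_ista_linear_decrease
    (n : ℕ) (A : Matrix (Fin n) (Fin n) ℝ) (hA : A.IsSymm)
    (lam L : ℝ) (hlam : 0 < lam)
    (hAlow : ∀ y : Fin n → ℝ, lam * (y ⬝ᵥ y) ≤ y ⬝ᵥ A.mulVec y)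
    (hAup : ∀ y : Fin n → ℝ, y ⬝ᵥ A.mulVec y ≤ L * (y ⬝ᵥ y))
    (b : Fin n → ℝ) (τ : ℝ) (hτ : 0 ≤ τ)
    (F : (Fin n → ℝ) → ℝ)
    (hF : ∀ y, F y = 1 / 2 * (y ⬝ᵥ A.mulVec y) - b ⬝ᵥ y + τ * ∑ i, |y i|)
    (xstar : Fin n → ℝ) (hxstar : ∀ y, F xstar ≤ F y)
    (x : Fin n → ℝ) (α : ℝ) (hα0 : 0 < α) (hαL : α ≤ 1 / L)
    (g : Fin n → ℝ) (hg : g = A.mulVec x - b)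
    (omega psi : Fin n → ℝ)
    (homega : ∀ i, omega i =
      if x i ≠ 0 then 0
      else if |g i| ≤ τ then 0
      else g i - τ * Real.sign (g i))
    (hpsi : ∀ i, psi i =
      if x i = 0 then 0
      else 1 / α * (x i - max (|x i - α * g i| - α * τ) 0 * Real.sign (x i - α * g i)))
    (hbalance : Real.sqrt (omega ⬝ᵥ omega) ≤ Real.sqrt (psi ⬝ᵥ psi)) :
    F (x - α • psi) - F xstar ≤ (1 - lam * α / 2) * (F x - F xstar) :=
  subspace_ista_linear_decrease_general n A hA lam L hlam hAlow hAup b τ hτ F hF xstar x α hα0 hαL g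
    hg omega psi homega hpsi hbalance
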